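/- Let χ be a primitive Dirichlet character modulo p^k (p prime, k ≥ 1) and let b be an integer with p^{k−1} || b. Then ∑_{a mod p^k} χ(a) · conj(χ(a + b)) = −p^{k−1}. -/

import Mathlib

/-!
Write `b = p^(k-1) c` with `p ∤ c`. For a unit `x`, `χ(x) conj χ(x + b) = conj χ(1 + b x⁻¹)`, so
the sum equals `∑ conj χ(1 + b y)` over the units `y`. Over all `y` this sum vanishes: `1 + b y`
runs over the residues `≡ 1 mod p^(k-1)`, on which a character of conductor `p^k` sums to zero.
For a non-unit `y = p w` we have `b y = 0`, and there are `p^(k-1)` of them, each contributing `1`.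
-/

open Finset ComplexConjugate

theorem ZMod.sum_range_natCast {M : Type*} [AddCommMonoid M] (n : ℕ) [NeZero n]
    (f : ZMod n → M) : ∑ a ∈ range n, f a = ∑ x, f x :=
  sum_nbij' (↑) ZMod.val (fun _ _ ↦ mem_univ _) (fun x _ ↦ mem_range.2 x.val_lt)
    (fun _ ha ↦ ZMod.val_cast_of_lt (mem_range.1 ha)) (fun x _ ↦ ZMod.natCast_zmod_val x)
    (fun _ _ ↦ rfl)

theorem ZMod.exists_eq_mul_of_castHom_eq_zero {n d : ℕ} [NeZero n] (hd : d ∣ n) {x : ZMod n}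
    (hx : ZMod.castHom hd (ZMod d) x = 0) : ∃ t : ZMod n, x = d * t := by
  rw [← ZMod.natCast_zmod_val x, map_natCast, ZMod.natCast_eq_zero_iff] at hx
  obtain ⟨t, ht⟩ := hx
  exact ⟨t, by rw [← ZMod.natCast_zmod_val x, ht, Nat.cast_mul]⟩

theorem ZMod.pow_pred_mul_eq_zero_of_not_isUnit {p k : ℕ} (hp : p.Prime) {x : ZMod (p ^ k)}
    (hx : ¬IsUnit x) : (p : ZMod (p ^ k)) ^ (k - 1) * x = 0 := by
  have : NeZero (p ^ k) := ⟨pow_ne_zero _ hp.ne_zero⟩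
  rw [← ZMod.natCast_zmod_val x, ZMod.isUnit_iff_coprime] at hx
  obtain ⟨t, ht⟩ : p ∣ x.val := by
    by_contra h
    exact hx ((hp.coprime_iff_not_dvd.2 h).symm.pow_right k)
  rw [← ZMod.natCast_zmod_val x, ht, ← Nat.cast_pow, ← Nat.cast_mul, ZMod.natCast_eq_zero_iff,
    ← mul_assoc, ← pow_succ]
  exact dvd_mul_of_dvd_left (pow_dvd_pow p (by omega)) t

theorem ZMod.isUnit_intCast_prime_pow_of_not_dvd {p : ℕ} (k : ℕ) (hp : p.Prime) {c : ℤ}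
    (hc : ¬(p : ℤ) ∣ c) : IsUnit (c : ZMod (p ^ k)) := by
  rw [ZMod.coe_int_isUnit_iff_isCoprime, Nat.cast_pow]
  exact .pow_left ((Nat.prime_iff_prime_int.mp hp).coprime_iff_not_dvd.2 hc)

theorem ZMod.card_filter_not_isUnit_prime_pow {p k : ℕ} [NeZero (p ^ k)] (hp : p.Prime)
    (hk : 1 ≤ k) : #{x : ZMod (p ^ k) | ¬IsUnit x} = p ^ (k - 1) := by
  have hunits : #{x : ZMod (p ^ k) | IsUnit x} = p ^ (k - 1) * (p - 1) := by
    rw [← Nat.totient_prime_pow hp hk, ← ZMod.card_units_eq_totient, ← card_univ,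
      ← card_map ⟨Units.val, Units.val_injective⟩]
    congr 1
    ext x
    simp [IsUnit, eq_comm]
  have htotal := card_filter_add_card_filter_not (s := (univ : Finset (ZMod (p ^ k)))) IsUnit
  rw [hunits, card_univ, ZMod.card] at htotal
  have hpk : p ^ k = p ^ (k - 1) * (p - 1) + p ^ (k - 1) := by
    rw [← mul_add_one, Nat.sub_add_cancel hp.one_le, ← pow_succ, Nat.sub_add_cancel hk]
  omega

namespace MulChar

variable {R : Type*} [CommRing R]

theorem conj_apply_ringInverse [Finite Rˣ] (χ : MulChar R ℂ) {x : R} (hx : IsUnit x) :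
    conj (χ (Ring.inverse x)) = χ x := by
  rw [← RCLike.star_def, star_apply', inv_apply, Ring.inverse_inverse hx]

theorem sum_mul_conj_apply_add [Fintype R] [DecidablePred (IsUnit : R → Prop)]
    (χ : MulChar R ℂ) (b : R) :
    ∑ x, χ x * conj (χ (x + b)) = ∑ x with IsUnit x, conj (χ (1 + b * x)) := by
  rw [← sum_filter_of_ne (p := IsUnit) fun x _ hx ↦
    by_contra fun h ↦ hx (by rw [χ.map_nonunit h, zero_mul])]
  have hinv : ∀ x ∈ ({x | IsUnit x} : Finset R), Ring.inverse x ∈ ({x | IsUnit x} : Finset R) := by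
    simp
  have hinvinv : ∀ x ∈ ({x | IsUnit x} : Finset R), Ring.inverse (Ring.inverse x) = x := by
    simp +contextual [Ring.inverse_inverse]
  refine sum_nbij' Ring.inverse Ring.inverse hinv hinv hinvinv hinvinv fun x hx ↦ ?_
  rw [mem_filter] at hx
  rw [← χ.conj_apply_ringInverse hx.2, ← map_mul, ← map_mul, mul_add,
    Ring.inverse_mul_cancel x hx.2, mul_comm]

end MulChar

namespace DirichletCharacter

theorem IsPrimitive.not_factorsThrough {R : Type*} [CommMonoidWithZero R] {n : ℕ}
    {χ : DirichletCharacter R n} (hχ : χ.IsPrimitive) {d : ℕ} (hd : d < n) :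
    ¬χ.FactorsThrough d := fun h ↦
  (Nat.sInf_le ((mem_conductorSet_iff χ).2 h)).not_gt (hχ.symm ▸ hd : d < χ.conductor)

theorem sum_one_add_mul_eq_zero {R : Type*} [CommRing R] [IsDomain R] {n : ℕ} [NeZero n]
    {χ : DirichletCharacter R n} {d : ℕ} (hd : d ∣ n) (hχ : ¬χ.FactorsThrough d) :
    ∑ z : ZMod n, χ (1 + d * z) = 0 := by
  rw [factorsThrough_iff_ker_unitsMap hd, SetLike.not_le_iff_exists] at hχ
  obtain ⟨u, hu, hχu⟩ := hχ
  have hu1 : ZMod.castHom hd (ZMod d) (u - 1) = 0 := by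
    rw [map_sub, map_one, sub_eq_zero]
    simpa [ZMod.unitsMap_def, Units.ext_iff] using hu
  obtain ⟨t, ht⟩ := ZMod.exists_eq_mul_of_castHom_eq_zero hd hu1
  have hχu' : χ u ≠ 1 := by
    simpa [MonoidHom.mem_ker, Units.ext_iff] using hχu
  refine eq_zero_of_mul_eq_self_left hχu' ?_
  -- `u ≡ 1 mod d`, so multiplication by `u` permutes the residues `≡ 1 mod d`.
  have hshift : ∀ z : ZMod n, (u : ZMod n) * (1 + d * z) = 1 + d * (t + u * z) := fun z ↦ by
    linear_combination ht
  simp only [mul_sum, ← map_mul, hshift]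
  exact ((Equiv.addLeft t).bijective.comp u.mulLeft_bijective).sum_comp fun z ↦ χ (1 + d * z)

theorem IsPrimitive.sum_one_add_prime_pow_pred_mul_eq_zero {R : Type*} [CommRing R] [IsDomain R]
    {p k : ℕ} [NeZero (p ^ k)] (hp : p.Prime) (hk : 1 ≤ k) {χ : DirichletCharacter R (p ^ k)}
    (hχ : χ.IsPrimitive) : ∑ x : ZMod (p ^ k), χ (1 + (p : ZMod (p ^ k)) ^ (k - 1) * x) = 0 := by
  simpa using sum_one_add_mul_eq_zero (pow_dvd_pow p (Nat.sub_le k 1))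
    (hχ.not_factorsThrough (Nat.pow_lt_pow_right hp.one_lt (by omega)))

end DirichletCharacter

theorem primitive_character_shifted_sum_eq_neg
    (p k : ℕ) (hp : p.Prime) (hk : 1 ≤ k)
    (χ : DirichletCharacter ℂ (p ^ k)) (hχ : χ.IsPrimitive)
    (b : ℤ)
    (hdvd : (p : ℤ) ^ (k - 1) ∣ b) (hndvd : ¬ (p : ℤ) ^ k ∣ b) :
    ∑ a ∈ Finset.range (p ^ k),
      χ (a : ZMod (p ^ k)) *
        (starRingEnd ℂ) (χ ((a : ZMod (p ^ k)) + (b : ZMod (p ^ k)))) =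
      -(p : ℂ) ^ (k - 1) := by
  classical
  have : NeZero (p ^ k) := ⟨pow_ne_zero _ hp.ne_zero⟩
  obtain ⟨c, rfl⟩ := hdvd
  have hpc : ¬(p : ℤ) ∣ c := fun hpc ↦ by
    have hpk : (p : ℤ) ^ k = p ^ (k - 1) * p := by rw [← pow_succ, Nat.sub_add_cancel hk]
    exact hndvd (hpk ▸ mul_dvd_mul_left _ hpc)
  have hc := ZMod.isUnit_intCast_prime_pow_of_not_dvd k hp hpc
  set N : ZMod (p ^ k) := (p : ZMod (p ^ k)) ^ (k - 1)
  have hb : ((p ^ (k - 1) * c : ℤ) : ZMod (p ^ k)) = N * c := by push_cast; rfl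
  have hall : ∑ x : ZMod (p ^ k), conj (χ (1 + N * c * x)) = 0 := calc
    _ = conj (∑ x, χ (1 + N * (hc.unit * x))) := by simp [mul_assoc]
    _ = conj (∑ x, χ (1 + N * x)) := by
      rw [hc.unit.mulLeft_bijective.sum_comp fun x ↦ χ (1 + N * x)]
    _ = 0 := by rw [hχ.sum_one_add_prime_pow_pred_mul_eq_zero hp hk, map_zero]
  have hnonunit : ∀ x : ZMod (p ^ k), ¬IsUnit x → conj (χ (1 + N * c * x)) = 1 := fun x hx ↦ by
    rw [mul_right_comm, ZMod.pow_pred_mul_eq_zero_of_not_isUnit hp hx, zero_mul, add_zero,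
      map_one, map_one]
  have hsplit := sum_filter_add_sum_filter_not univ IsUnit fun x ↦ conj (χ (1 + N * c * x))
  rw [hall, sum_congr rfl fun x hx ↦ hnonunit x (mem_filter.1 hx).2,
    sum_const, ZMod.card_filter_not_isUnit_prime_pow hp hk, nsmul_one] at hsplit
  rw [ZMod.sum_range_natCast (p ^ k) fun x ↦ χ x * conj (χ (x + _)), hb,
    MulChar.sum_mul_conj_apply_add]
  push_cast at hsplit
  linear_combination hsplit
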